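/- For all m, n, p ≥ 1 with N = m+n+p, in the cactus group J_N one has (s_{1,N} · s_{1,m} · s_{m+1,N}) · (s_{m+1,N} · s_{m+1,m+n} · s_{m+n+1,N}) = (s_{1,N} · s_{1,m+n} · s_{m+n+1,N}) · (s_{1,m+n} · s_{1,m} · s_{m+1,m+n}), where s_{p,p} denotes the identity element. (This is the coboundary-category axiom σ_{m,p+n}·(1_m ⊗ σ_{n,p}) = σ_{n+m,p}·(σ_{m,n} ⊗ 1_p) for the commutor σ_{a,b} = s_{1,a+b}s_{1,a}s_{a+1,a+b} on the free coboundary category B𝐉.) -/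

import Mathlib

/-- Generators `s_{p,q}`, `1 ≤ p < q ≤ n`, of the `n`-fruit cactus group. -/
def CactusGen (n : ℕ) : Type :=
  { pq : ℕ × ℕ // 1 ≤ pq.1 ∧ pq.1 < pq.2 ∧ pq.2 ≤ n }

/-- The defining relations of the `n`-fruit cactus group, as elements of the free group:
(i) `s_{p,q}² = e`; (ii) `s_{p,q}s_{k,l} = s_{k,l}s_{p,q}` for disjoint intervals;
(iii) `s_{p,q}s_{k,l} = s_{p+q-l,p+q-k}s_{p,q}` for `p ≤ k < l ≤ q`. -/
def cactusRels (n : ℕ) : Set (FreeGroup (CactusGen n)) :=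
  { x |
    (∃ (p q : ℕ) (h : 1 ≤ p ∧ p < q ∧ q ≤ n),
      x = FreeGroup.of (⟨(p, q), h⟩ : CactusGen n) * FreeGroup.of ⟨(p, q), h⟩) ∨
    (∃ (p q k l : ℕ) (h : 1 ≤ p ∧ p < q ∧ q ≤ n) (h' : 1 ≤ k ∧ k < l ∧ l ≤ n),
      (q < k ∨ l < p) ∧
      x = FreeGroup.of (⟨(p, q), h⟩ : CactusGen n) * FreeGroup.of ⟨(k, l), h'⟩ *
        (FreeGroup.of (⟨(k, l), h'⟩ : CactusGen n) * FreeGroup.of ⟨(p, q), h⟩)⁻¹) ∨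
    (∃ (p q k l : ℕ) (h : 1 ≤ p ∧ p < q ∧ q ≤ n) (h' : 1 ≤ k ∧ k < l ∧ l ≤ n)
        (h'' : 1 ≤ p + q - l ∧ p + q - l < p + q - k ∧ p + q - k ≤ n),
      (p ≤ k ∧ l ≤ q) ∧
      x = FreeGroup.of (⟨(p, q), h⟩ : CactusGen n) * FreeGroup.of ⟨(k, l), h'⟩ *
        (FreeGroup.of (⟨(p + q - l, p + q - k), h''⟩ : CactusGen n) *
          FreeGroup.of ⟨(p, q), h⟩)⁻¹) }

/-- The `n`-fruit cactus group `J_n`, as a presented group. -/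
def CactusGroup (n : ℕ) : Type :=
  PresentedGroup (cactusRels n)

instance (n : ℕ) : Group (CactusGroup n) :=
  inferInstanceAs (Group (PresentedGroup (cactusRels n)))

/-- The generator `s_{p,q}` of the cactus group `J_n`. -/
def s {n : ℕ} (p q : ℕ) (h : 1 ≤ p ∧ p < q ∧ q ≤ n) : CactusGroup n :=
  PresentedGroup.of ⟨(p, q), h⟩

/-- The generator `s_{p,q}` of `J_n` extended by the convention that `s_{p,p}` denotes the
identity element. -/
def sE {n : ℕ} (p q : ℕ) (h : 1 ≤ p ∧ p ≤ q ∧ q ≤ n) : CactusGroup n :=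
  if hlt : p < q then s p q ⟨h.1, hlt, h.2.2⟩ else 1

/-- Transport of cactus group elements along an equality. -/
def Jcast {a b : ℕ} (h : a = b) (x : CactusGroup a) : CactusGroup b := h ▸ x

/-- `partialSum k i = ∑_{j < i} k j`. -/
def partialSum {n : ℕ} (k : Fin n → ℕ) (i : Fin n) : ℕ :=
  ∑ j ∈ Finset.Iio i, k j

theorem partialSum_add_le {n : ℕ} (k : Fin n → ℕ) (i : Fin n) :
    partialSum k i + k i ≤ ∑ j, k j := by
  have h1 : partialSum k i + k i = ∑ j ∈ Finset.Iic i, k j := by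
    rw [partialSum, add_comm, ← Finset.sum_insert (by simp), Finset.Iio_insert]
  rw [h1]
  exact Finset.sum_le_sum_of_subset (Finset.subset_univ _)

theorem s_mul_self {n p q : ℕ} (h : 1 ≤ p ∧ p < q ∧ q ≤ n) :
    (s p q h : CactusGroup n) * s p q h = 1 :=
  PresentedGroup.one_of_mem (Or.inl ⟨p, q, h, rfl⟩)

theorem s_commute_of_lt {n p q k l : ℕ} (h : 1 ≤ p ∧ p < q ∧ q ≤ n)
    (h' : 1 ≤ k ∧ k < l ∧ l ≤ n) (hqk : q < k) :
    Commute (s p q h : CactusGroup n) (s k l h') :=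
  PresentedGroup.mk_eq_mk_of_mul_inv_mem (Or.inr (Or.inl ⟨p, q, k, l, h, h', Or.inl hqk, rfl⟩))

theorem sE_mul_self {n p q : ℕ} (h : 1 ≤ p ∧ p ≤ q ∧ q ≤ n) :
    (sE p q h : CactusGroup n) * sE p q h = 1 := by
  unfold sE
  split
  · exact s_mul_self _
  · exact mul_one 1

theorem sE_mul_sE_mul {n p q : ℕ} (h : 1 ≤ p ∧ p ≤ q ∧ q ≤ n) (x : CactusGroup n) :
    sE p q h * (sE p q h * x) = x := by
  rw [← mul_assoc, sE_mul_self, one_mul]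

theorem sE_commute_of_lt {n p q k l : ℕ} (h : 1 ≤ p ∧ p ≤ q ∧ q ≤ n)
    (h' : 1 ≤ k ∧ k ≤ l ∧ l ≤ n) (hqk : q < k) :
    Commute (sE p q h : CactusGroup n) (sE k l h') := by
  unfold sE
  split <;> split
  · exact s_commute_of_lt _ _ hqk
  all_goals simp

/-- The hexagon/coboundary axiom `σ_{m,p+n}·(1_m ⊗ σ_{n,p}) = σ_{n+m,p}·(σ_{m,n} ⊗ 1_p)`
for the commutor `σ_{a,b} = s_{1,a+b} s_{1,a} s_{a+1,a+b}` on the free coboundary category: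
in `J_N`, `N = m+n+p`,
`(s_{1,N} s_{1,m} s_{m+1,N})(s_{m+1,N} s_{m+1,m+n} s_{m+n+1,N})
  = (s_{1,N} s_{1,m+n} s_{m+n+1,N})(s_{1,m+n} s_{1,m} s_{m+1,m+n})`
(with the convention `s_{p,p} = e`). -/
theorem commutor_coboundary_axiom (m n p : ℕ) (hm : 1 ≤ m) (hn : 1 ≤ n) (hp : 1 ≤ p) :
    (sE 1 (m + n + p) (by omega) * sE 1 m (by omega) * sE (m + 1) (m + n + p) (by omega) :
        CactusGroup (m + n + p)) *
      (sE (m + 1) (m + n + p) (by omega) * sE (m + 1) (m + n) (by omega) *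
        sE (m + n + 1) (m + n + p) (by omega)) =
    (sE 1 (m + n + p) (by omega) * sE 1 (m + n) (by omega) *
        sE (m + n + 1) (m + n + p) (by omega)) *
      (sE 1 (m + n) (by omega) * sE 1 m (by omega) * sE (m + 1) (m + n) (by omega)) := by
  set A : CactusGroup (m + n + p) := sE 1 (m + n + p) _
  set B : CactusGroup (m + n + p) := sE 1 m _
  set D : CactusGroup (m + n + p) := sE (m + 1) (m + n) _
  set E : CactusGroup (m + n + p) := sE (m + n + 1) (m + n + p) _
  set F : CactusGroup (m + n + p) := sE 1 (m + n) _
  have hBDE : Commute (B * D) E :=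
    (sE_commute_of_lt _ _ (by omega)).mul_left (sE_commute_of_lt _ _ (by omega))
  have hFE : Commute F E := sE_commute_of_lt _ _ (by omega)
  -- Only relations (i) and (ii) are needed: both sides reduce to `A * B * D * E`.
  calc _ = A * ((B * D) * E) := by simp only [mul_assoc, sE_mul_sE_mul]
    _ = A * (F * (F * (E * (B * D)))) := by rw [hBDE.eq, sE_mul_sE_mul]
    _ = _ := by rw [hFE.left_comm]; simp only [mul_assoc]
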